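/- Let f_k : E → ℝ≥0, for k in a finite set S, be monotone non-decreasing functions on a linearly ordered finite edge set E, and let x̃ ∈ [0,1]^S. Suppose a subset J ⊆ S is removed greedily from the left: J consists of demands k with f_k(e_k) > 0 for the smallest edges e_k, removed until Σ_{k∈J} f_k(e_k) x̃_k ≥ δ (with the last removal overshooting by at most max_k f_k(e_k)x̃_k). Then for every edge e with Σ_{k∈S∖J} f_k(e) x̃_k > 0 we have Σ_{k∈S∖J} f_k(e) x̃_k ≤ Σ_{k∈S} f_k(e) x̃_k − δ. -/
import Mathlib


/-- Correctness of the greedy left-most removal step (Algorithm Modify): after removing a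
set `J` of demands of total fractional contribution at least `δ` at their first positive
edges, chosen left-most, the remaining fractional profile drops by at least `δ` at every
edge where it is positive. -/
theorem stmt_13 {ι : Type*} [DecidableEq ι] {m : ℕ} (S J : Finset ι) (hJS : J ⊆ S)
    (f : ι → Fin m → ℝ) (hmono : ∀ k ∈ S, Monotone (f k))
    (hnonneg : ∀ k ∈ S, ∀ e, 0 ≤ f k e)
    (x : ι → ℝ) (hx : ∀ k ∈ S, 0 ≤ x k ∧ x k ≤ 1)
    (e : ι → Fin m)
    (hek : ∀ k ∈ J, 0 < f k (e k) ∧ ∀ e' < e k, f k e' = 0)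
    (hgreedy : ∀ k ∈ J, ∀ k' ∈ S \ J, ∀ e', 0 < f k' e' → e k ≤ e')
    (δ : ℝ) (hδ : 0 < δ)
    (htot : δ ≤ ∑ k ∈ J, f k (e k) * x k) :
    ∀ e' : Fin m, 0 < ∑ k ∈ S \ J, f k e' * x k →
      ∑ k ∈ S \ J, f k e' * x k ≤ (∑ k ∈ S, f k e' * x k) - δ := by
  intro e' hpos
  -- there is k' ∈ S \ J with f k' e' * x k' > 0
  obtain ⟨k', hk', hk'pos⟩ : ∃ k' ∈ S \ J, 0 < f k' e' * x k' := by
    by_contra h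
    push_neg at h
    have : ∑ k ∈ S \ J, f k e' * x k ≤ 0 := Finset.sum_nonpos h
    linarith
  have hfk' : 0 < f k' e' := by
    rcases (mul_pos_iff.mp hk'pos) with ⟨h1, _⟩ | ⟨h1, h2⟩
    · exact h1
    · exact absurd h2 (not_lt.mpr ((hx k' (Finset.mem_sdiff.mp hk').1).1))
  have hle : ∀ k ∈ J, f k (e k) * x k ≤ f k e' * x k := by
    intro k hk
    have hkS := hJS hk
    have he : e k ≤ e' := hgreedy k hk k' hk' e' hfk'
    exact mul_le_mul_of_nonneg_right (hmono k hkS he) (hx k hkS).1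
  have h1 : δ ≤ ∑ k ∈ J, f k e' * x k :=
    htot.trans (Finset.sum_le_sum hle)
  have hsplit : ∑ k ∈ S, f k e' * x k
      = ∑ k ∈ S \ J, f k e' * x k + ∑ k ∈ J, f k e' * x k :=
    (Finset.sum_sdiff hJS).symm
  linarith
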